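/- arXiv:2207.12734 — 2 statements merged into one kernel-verified Lean document; each statement's English description precedes it below -/
import Mathlib

section
/- Let N ≥ 1 and let f : ℝ_+ → ℝ be piecewise continuous with jumps only at the points k/N for integers k ≥ 1. Let (α_k)_{k≥0} be real numbers and define g(t) = Σ_{k=0}^{⌊Nt⌋−1} α_k (with the empty sum equal to 0), F(t) = ∫_0^t f(s) ds, and ψ = F + g. Then for all t ≥ 0, ψ(t)^2 = 2 ∫_0^t f(s) ψ(s) ds + Σ_{k=0}^{⌊Nt⌋−1} α_k² + 2 Σ_{k=0}^{⌊Nt⌋−1} ψ((k+1)/N⁻) α_k, where ψ(s⁻) denotes the left limit of ψ at s. -/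
/-! On the cell `[k/N, (k+1)/N)` the function `ψ` is `F` plus the constant `α₀ + ⋯ + α_{k-1}`,
and `F` is differentiable with derivative `f` inside the cell, so the fundamental theorem of
calculus applied to `(F + c)²` computes `2 ∫ f ψ` over a cell as the difference of the squares
of `ψ` at its two ends, the right one taken as a left limit. Summed over the cells these squares
telescope, except for the jumps
`ψ((k+1)/N)² - ψ((k+1)/N⁻)² = α_k² + 2 ψ((k+1)/N⁻) α_k`. -/

open MeasureTheory Filter Set Topology

lemma continuousOn_primitive_Icc {f : ℝ → ℝ} {x₀ a b : ℝ} (hx₀a : x₀ ≤ a)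
    (hf : IntervalIntegrable f volume x₀ b) :
    ContinuousOn (fun t => ∫ s in x₀..t, f s) (Icc a b) :=
  (intervalIntegral.continuousOn_primitive_interval' hf left_mem_uIcc).mono
    fun _ hx => Icc_subset_uIcc ⟨hx₀a.trans hx.1, hx.2⟩

lemma hasDerivAt_primitive_of_continuousOn_Ioo {f : ℝ → ℝ} {x₀ a b x : ℝ} (hx₀a : x₀ ≤ a)
    (hf : IntervalIntegrable f volume x₀ b) (hfc : ContinuousOn f (Ioo a b))
    (hx : x ∈ Ioo a b) :
    HasDerivAt (fun t => ∫ s in x₀..t, f s) (f x) x :=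
  intervalIntegral.integral_hasDerivAt_right
    (hf.mono_set (uIcc_subset_uIcc_left (Icc_subset_uIcc ⟨hx₀a.trans hx.1.le, hx.2.le⟩)))
    (hfc.stronglyMeasurableAtFilter isOpen_Ioo x hx)
    (hfc.continuousAt (isOpen_Ioo.mem_nhds hx))

lemma tendsto_nhdsLT_of_eqOn_Ico {ψ G : ℝ → ℝ} {a b : ℝ} (hab : a < b)
    (hψG : EqOn ψ G (Ico a b)) (hG : ContinuousWithinAt G (Icc a b) b) :
    Tendsto ψ (𝓝[<] b) (𝓝 (G b)) :=
  have hψG' : G =ᶠ[𝓝[<] b] ψ :=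
    eventually_of_mem (Ioo_mem_nhdsLT hab) fun _ hx => (hψG (Ioo_subset_Ico_self hx)).symm
  (hG.mono_of_mem_nhdsWithin (Icc_mem_nhdsLT hab)).tendsto.congr' hψG'

lemma intervalIntegrable_mul_of_eqOn_Ioo {f ψ G : ℝ → ℝ} {a b : ℝ} (hab : a ≤ b)
    (hψG : EqOn ψ G (Ioo a b)) (hG : ContinuousOn G (Icc a b))
    (hf : IntervalIntegrable f volume a b) :
    IntervalIntegrable (fun x => f x * ψ x) volume a b :=
  (hf.mul_continuousOn (uIcc_of_le hab ▸ hG)).congr_uIoo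
    fun x hx => by rw [hψG (uIoo_of_le hab ▸ hx)]

lemma two_mul_integral_mul_of_eqOn_Ioo {f ψ G : ℝ → ℝ} {a b : ℝ} (hab : a ≤ b)
    (hψG : EqOn ψ G (Ioo a b)) (hG : ContinuousOn G (Icc a b))
    (hGf : ∀ x ∈ Ioo a b, HasDerivAt G (f x) x) (hf : IntervalIntegrable f volume a b) :
    2 * ∫ x in a..b, f x * ψ x = G b ^ 2 - G a ^ 2 := by
  rw [intervalIntegral.integral_congr_Ioo_of_le hab fun x hx => by rw [hψG hx],
    ← intervalIntegral.integral_const_mul]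
  refine intervalIntegral.integral_eq_sub_of_hasDerivAt_of_le hab (hG.pow 2) (fun x hx => ?_)
    ((hf.mul_continuousOn (uIcc_of_le hab ▸ hG)).const_mul 2)
  exact ((hGf x hx).pow 2).congr_deriv (by norm_num; ring)

theorem sq_eq_add_integral_add_sum_jumps {f ψ : ℝ → ℝ} {T : ℕ → ℝ} {G : ℕ → ℝ → ℝ}
    (hT : StrictMono T) (hψG : ∀ k, EqOn ψ (G k) (Ico (T k) (T (k + 1))))
    (hG : ∀ k, ContinuousOn (G k) (Icc (T k) (T (k + 1))))
    (hGf : ∀ k, ∀ x ∈ Ioo (T k) (T (k + 1)), HasDerivAt (G k) (f x) x)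
    (hf : ∀ k, IntervalIntegrable f volume (T k) (T (k + 1))) {n : ℕ} {t : ℝ}
    (ht : t ∈ Ico (T n) (T (n + 1))) :
    ψ t ^ 2 = ψ (T 0) ^ 2 + 2 * (∫ s in T 0..t, f s * ψ s) +
      ∑ k ∈ Finset.range n, (ψ (T (k + 1)) ^ 2 - G k (T (k + 1)) ^ 2) := by
  have hψT k : ψ (T k) = G k (T k) := hψG k ⟨le_rfl, hT k.lt_succ_self⟩
  have piece k {a b : ℝ} (hka : T k ≤ a) (hab : a ≤ b) (hbk : b ≤ T (k + 1)) :
      IntervalIntegrable (fun s => f s * ψ s) volume a b ∧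
        2 * ∫ s in a..b, f s * ψ s = G k b ^ 2 - G k a ^ 2 := by
    have hψG' : EqOn ψ (G k) (Ioo a b) :=
      (hψG k).mono (Ioo_subset_Ico_self.trans (Ico_subset_Ico hka hbk))
    have hG' := (hG k).mono (Icc_subset_Icc hka hbk)
    have hf' : IntervalIntegrable f volume a b := (hf k).mono_set <| uIcc_subset_uIcc
      (Icc_subset_uIcc ⟨hka, hab.trans hbk⟩) (Icc_subset_uIcc ⟨hka.trans hab, hbk⟩)
    exact ⟨intervalIntegrable_mul_of_eqOn_Ioo hab hψG' hG' hf',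
      two_mul_integral_mul_of_eqOn_Ioo hab hψG' hG'
        (fun x hx => hGf k x ⟨hka.trans_lt hx.1, hx.2.trans_le hbk⟩) hf'⟩
  have hcell k := piece k le_rfl (hT.monotone k.le_succ) le_rfl
  have hlast := piece n le_rfl ht.1 ht.2.le
  have htel : ∑ k ∈ Finset.range n, (G k (T (k + 1)) ^ 2 - ψ (T k) ^ 2) +
      ∑ k ∈ Finset.range n, (ψ (T (k + 1)) ^ 2 - G k (T (k + 1)) ^ 2) =
        ψ (T n) ^ 2 - ψ (T 0) ^ 2 := by
    rw [← Finset.sum_add_distrib, ← Finset.sum_range_sub (fun k => ψ (T k) ^ 2)]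
    exact Finset.sum_congr rfl fun k _ => by ring
  rw [← intervalIntegral.integral_add_adjacent_intervals
      (IntervalIntegrable.trans_iterate fun k _ => (hcell k).1) hlast.1,
    ← intervalIntegral.sum_integral_adjacent_intervals fun k _ => (hcell k).1, mul_add,
    Finset.mul_sum, hlast.2, Finset.sum_congr rfl fun k _ => (hcell k).2, ← hψG n ht, ← hψT n]
  simp only [← hψT]
  linarith

lemma floor_natCast_mul_eq_iff {N k : ℕ} {s : ℝ} (hN : 0 < N) (hs : 0 ≤ s) :
    ⌊(N : ℝ) * s⌋₊ = k ↔ s ∈ Ico ((k : ℝ) / N) (((k : ℝ) + 1) / N) := by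
  have hN' : (0 : ℝ) < N := Nat.cast_pos.mpr hN
  rw [Nat.floor_eq_iff (by positivity), mem_Ico, div_le_iff₀ hN', lt_div_iff₀ hN', mul_comm]

theorem sq_primitive_add_jumps {f ψ : ℝ → ℝ} {T : ℕ → ℝ} {α ψm : ℕ → ℝ}
    (hT : StrictMono T)
    (hψ : ∀ k, EqOn ψ (fun s => (∫ u in T 0..s, f u) + ∑ j ∈ Finset.range k, α j)
      (Ico (T k) (T (k + 1))))
    (hf : ∀ k, IntervalIntegrable f volume (T 0) (T k))
    (hfc : ∀ k, ContinuousOn f (Ioo (T k) (T (k + 1))))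
    (hψm : ∀ k, Tendsto ψ (𝓝[<] (T (k + 1))) (𝓝 (ψm k))) {n : ℕ} {t : ℝ}
    (ht : t ∈ Ico (T n) (T (n + 1))) :
    ψ t ^ 2 = 2 * (∫ s in T 0..t, f s * ψ s) + ∑ k ∈ Finset.range n, α k ^ 2 +
      2 * ∑ k ∈ Finset.range n, ψm k * α k := by
  set G : ℕ → ℝ → ℝ := fun k s => (∫ u in T 0..s, f u) + ∑ j ∈ Finset.range k, α j
  have hT0_le k : T 0 ≤ T k := hT.monotone k.zero_le
  have hG k : ContinuousOn (G k) (Icc (T k) (T (k + 1))) :=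
    (continuousOn_primitive_Icc (hT0_le k) (hf (k + 1))).add continuousOn_const
  have hGf k : ∀ x ∈ Ioo (T k) (T (k + 1)), HasDerivAt (G k) (f x) x := fun x hx =>
    (hasDerivAt_primitive_of_continuousOn_Ioo (hT0_le k) (hf (k + 1)) (hfc k) hx).add_const _
  have hψm_eq k : ψm k = G k (T (k + 1)) :=
    tendsto_nhds_unique (hψm k) (tendsto_nhdsLT_of_eqOn_Ico (hT k.lt_succ_self) (hψ k)
      (hG k _ (right_mem_Icc.mpr (hT k.lt_succ_self).le)))
  have hjump k : ψ (T (k + 1)) ^ 2 - G k (T (k + 1)) ^ 2 = α k ^ 2 + 2 * (ψm k * α k) := by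
    rw [hψ (k + 1) ⟨le_rfl, hT (k + 1).lt_succ_self⟩, hψm_eq]
    simp only [G, Finset.sum_range_succ]
    ring
  have hψ0 : ψ (T 0) = 0 := by simpa using hψ 0 ⟨le_rfl, hT Nat.zero_lt_one⟩
  have hf_cell k : IntervalIntegrable f volume (T k) (T (k + 1)) :=
    (hf k).symm.trans (hf (k + 1))
  rw [sq_eq_add_integral_add_sum_jumps (G := G) hT hψ hG hGf hf_cell ht, hψ0,
    Finset.sum_congr rfl fun k _ => hjump k, Finset.sum_add_distrib, Finset.mul_sum]
  ring

/-- Discrete Itô-type formula (Lemma B.3 of the paper): if `f : ℝ₊ → ℝ` is piecewise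
continuous with jumps only at the points `k/N`, `g(t) = Σ_{k<⌊Nt⌋} α_k` is the associated
pure-jump step function, `F(t) = ∫_0^t f`, and `ψ = F + g`, then for all `t ≥ 0`,
`ψ(t)² = 2∫_0^t f ψ + Σ_{k<⌊Nt⌋} α_k² + 2 Σ_{k<⌊Nt⌋} ψ((k+1)/N⁻) α_k`,
where `ψ((k+1)/N⁻)` is the left limit of `ψ` at `(k+1)/N`. -/
theorem discrete_ito_formula (N : ℕ) (hN : 1 ≤ N) (f : ℝ → ℝ) (α : ℕ → ℝ)
    (hf_int : ∀ t : ℝ, 0 ≤ t → IntervalIntegrable f MeasureTheory.volume 0 t)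
    (hf_cont : ∀ k : ℕ, ContinuousOn f (Set.Ico ((k : ℝ) / N) (((k : ℝ) + 1) / N)))
    (g F ψ : ℝ → ℝ)
    (hg : ∀ t, g t = ∑ k ∈ Finset.range ⌊(N : ℝ) * t⌋₊, α k)
    (hF : ∀ t, F t = ∫ s in (0:ℝ)..t, f s)
    (hψ : ∀ t, ψ t = F t + g t)
    (ψm : ℕ → ℝ)
    (hψm : ∀ k : ℕ, Tendsto ψ
      (nhdsWithin (((k : ℝ) + 1) / N) (Set.Iio (((k : ℝ) + 1) / N))) (nhds (ψm k))) :
    ∀ t : ℝ, 0 ≤ t →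
      ψ t ^ 2 = 2 * (∫ s in (0:ℝ)..t, f s * ψ s) +
        (∑ k ∈ Finset.range ⌊(N : ℝ) * t⌋₊, (α k) ^ 2) +
        2 * ∑ k ∈ Finset.range ⌊(N : ℝ) * t⌋₊, ψm k * α k := by
  intro t ht
  have hN' : (0 : ℝ) < N := by exact_mod_cast hN
  set T : ℕ → ℝ := fun k => k / N
  have hT : StrictMono T := fun i j hij => div_lt_div_of_pos_right (by exact_mod_cast hij) hN'
  have hT0 : T 0 = 0 := by simp [T]
  have hTsucc (k : ℕ) : T (k + 1) = ((k : ℝ) + 1) / N := by simp [T]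
  have hψ' (k : ℕ) : EqOn ψ (fun s => (∫ u in T 0..s, f u) + ∑ j ∈ Finset.range k, α j)
      (Ico (T k) (T (k + 1))) := fun s hs => by
    have hs0 : 0 ≤ s := (by positivity : 0 ≤ T k).trans hs.1
    rw [hψ, hg, hF, hT0, (floor_natCast_mul_eq_iff hN hs0).mpr (hTsucc k ▸ hs)]
  have hIto := sq_primitive_add_jumps hT hψ' (fun k => hT0 ▸ hf_int _ (by positivity))
    (fun k => (hf_cont k).mono (hTsucc k ▸ Ioo_subset_Ico_self)) (fun k => hTsucc k ▸ hψm k)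
    (hTsucc _ ▸ (floor_natCast_mul_eq_iff hN ht).mp rfl)
  rwa [hT0] at hIto
end

section
/- Let (φ¹_t) and (φ²_t) be the flows of two time-dependent vector fields v¹, v² on ℝ^d, each Lipschitz in space with constant L uniformly in time. Then for all probability measures μ, ν ∈ P₁(ℝ^d) and all t ≥ 0, W₁(φ¹_t # μ, φ²_t # ν) ≤ e^{Lt} W₁(μ, ν) + ((e^{Lt} − 1)/L) · sup_{0 ≤ s ≤ t} ‖v¹_s − v²_s‖_∞. -/
open MeasureTheory

/-- The `1`-Wasserstein distance, defined as the infimum over couplings of the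
expected distance. -/
noncomputable def W1 {E : Type*} [MeasurableSpace E] [PseudoMetricSpace E]
    (μ ν : Measure E) : ℝ :=
  sInf {r : ℝ | ∃ π : Measure (E × E), π.map Prod.fst = μ ∧ π.map Prod.snd = ν ∧
    r = ∫ z, dist z.1 z.2 ∂π}

/-! By Grönwall's inequality, two trajectories of `v¹` and `v²` satisfy
`|φ¹_t x − φ²_t y| ≤ e^{Lt} |x − y| + ((e^{Lt} − 1)/L) M`. Pushing a coupling `π` of `μ` and `ν`
forward by `φ¹_t × φ²_t` gives a coupling of `φ¹_t#μ` and `φ²_t#ν` whose cost is therefore at most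
`e^{Lt}` times the cost of `π` plus the same additive term; take the infimum over `π`. -/

open Set

section Flow

variable {E : Type*} [NormedAddCommGroup E] [NormedSpace ℝ E]

structure IsFlow (v φ : ℝ → E → E) : Prop where
  apply_zero : ∀ x, φ 0 x = x
  hasDerivAt : ∀ x t, HasDerivAt (fun s => φ s x) (v t (φ t x)) t

namespace IsFlow

variable {v v₁ v₂ φ φ₁ φ₂ : ℝ → E → E} {L : NNReal} {t M : ℝ}

theorem dist_le_gronwallBound (h₁ : IsFlow v₁ φ₁) (h₂ : IsFlow v₂ φ₂)
    (hv₁ : ∀ s, LipschitzWith L (v₁ s)) (ht : 0 ≤ t)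
    (hM : ∀ s ∈ Ico 0 t, ∀ x, ‖v₁ s x - v₂ s x‖ ≤ M) (x y : E) :
    dist (φ₁ t x) (φ₂ t y) ≤ gronwallBound (dist x y) L M t := by
  have h := dist_le_of_approx_trajectories_ODE hv₁ (εf := 0)
    (fun s _ => (h₁.hasDerivAt x s).continuousAt.continuousWithinAt)
    (fun s _ => (h₁.hasDerivAt x s).hasDerivWithinAt) (fun s _ => (dist_self _).le)
    (fun s _ => (h₂.hasDerivAt y s).continuousAt.continuousWithinAt)
    (fun s _ => (h₂.hasDerivAt y s).hasDerivWithinAt)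
    (fun s hs => by rw [dist_eq_norm, norm_sub_rev]; exact hM s hs _)
    (by rw [h₁.apply_zero, h₂.apply_zero]) t ⟨ht, le_rfl⟩
  simpa only [zero_add, sub_zero] using h

theorem lipschitzWith (h : IsFlow v φ) (hv : ∀ s, LipschitzWith L (v s)) (ht : 0 ≤ t) :
    LipschitzWith (Real.exp (L * t)).toNNReal (φ t) := by
  refine LipschitzWith.of_dist_le_mul fun x y => ?_
  have := h.dist_le_gronwallBound h hv ht (M := 0) (by simp) x y
  rwa [gronwallBound_ε0, mul_comm, ← Real.coe_toNNReal _ (Real.exp_pos _).le] at this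

end IsFlow

end Flow

section Wasserstein

variable {E : Type*} [PseudoMetricSpace E] [MeasurableSpace E] {μ ν : Measure E}

theorem W1_le_integral_dist {π : Measure (E × E)} (h₁ : π.map Prod.fst = μ)
    (h₂ : π.map Prod.snd = ν) : W1 μ ν ≤ ∫ z, dist z.1 z.2 ∂π :=
  csInf_le ⟨0, by rintro _ ⟨π, -, -, rfl⟩; exact integral_nonneg fun _ => dist_nonneg⟩
    ⟨π, h₁, h₂, rfl⟩

theorem le_mul_W1_add [IsProbabilityMeasure μ] [IsProbabilityMeasure ν] {a b c : ℝ}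
    (ha : 0 ≤ a) (h : ∀ π : Measure (E × E), π.map Prod.fst = μ → π.map Prod.snd = ν →
      c ≤ a * ∫ z, dist z.1 z.2 ∂π + b) :
    c ≤ a * W1 μ ν + b := by
  have hne : {r : ℝ | ∃ π : Measure (E × E), π.map Prod.fst = μ ∧ π.map Prod.snd = ν ∧
      r = ∫ z, dist z.1 z.2 ∂π}.Nonempty :=
    ⟨_, μ.prod ν, by simp, by simp, rfl⟩
  rw [← sub_le_iff_le_add, W1, ← smul_eq_mul, ← Real.sInf_smul_of_nonneg ha]
  refine le_csInf hne.smul_set ?_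
  rintro _ ⟨_, ⟨π, h₁, h₂, rfl⟩, rfl⟩
  simpa only [smul_eq_mul, sub_le_iff_le_add] using h π h₁ h₂

end Wasserstein

section Pushforward

variable {E F : Type*} [NormedAddCommGroup E] [MeasurableSpace E] [OpensMeasurableSpace E]
  [SecondCountableTopology E] [PseudoMetricSpace F] [MeasurableSpace F] [OpensMeasurableSpace F]
  [SecondCountableTopology F] {μ ν : Measure E} {π : Measure (E × E)}

theorem integrable_dist_of_map_fst_of_map_snd (h₁ : π.map Prod.fst = μ)
    (h₂ : π.map Prod.snd = ν) (hμ : Integrable (‖·‖) μ) (hν : Integrable (‖·‖) ν) :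
    Integrable (fun z => dist z.1 z.2) π := by
  have hfst : Integrable (fun z => ‖z.1‖) π :=
    (integrable_map_measure (h₁ ▸ hμ.aestronglyMeasurable) measurable_fst.aemeasurable).1
      (h₁ ▸ hμ)
  have hsnd : Integrable (fun z => ‖z.2‖) π :=
    (integrable_map_measure (h₂ ▸ hν.aestronglyMeasurable) measurable_snd.aemeasurable).1
      (h₂ ▸ hν)
  refine (hfst.add hsnd).mono' measurable_dist.aestronglyMeasurable (ae_of_all _ fun z => ?_)
  rw [Real.norm_of_nonneg dist_nonneg]
  exact dist_le_norm_add_norm z.1 z.2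

theorem W1_map_map_le [IsProbabilityMeasure μ] [IsProbabilityMeasure ν]
    (hμ : Integrable (‖·‖) μ) (hν : Integrable (‖·‖) ν) {f g : E → F}
    (hf : Measurable f) (hg : Measurable g) {a b : ℝ} (ha : 0 ≤ a)
    (hfg : ∀ x y, dist (f x) (g y) ≤ a * dist x y + b) :
    W1 (μ.map f) (ν.map g) ≤ a * W1 μ ν + b := by
  refine le_mul_W1_add ha fun π h₁ h₂ => ?_
  have hπ : IsProbabilityMeasure π := by
    subst h₁; exact Measure.isProbabilityMeasure_of_map Prod.fst
  have hprod : Measurable (Prod.map f g) := hf.prodMap hg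
  have hdist := integrable_dist_of_map_fst_of_map_snd h₁ h₂ hμ hν
  have hbound : Integrable (fun z : E × E => a * dist z.1 z.2 + b) π :=
    (hdist.const_mul a).add (integrable_const b)
  calc W1 (μ.map f) (ν.map g)
      ≤ ∫ z, dist z.1 z.2 ∂(π.map (Prod.map f g)) := by
        refine W1_le_integral_dist ?_ ?_
        · rw [Measure.map_map measurable_fst hprod, ← h₁, Measure.map_map hf measurable_fst]
          rfl
        · rw [Measure.map_map measurable_snd hprod, ← h₂, Measure.map_map hg measurable_snd]
          rfl
    _ = ∫ z, dist (f z.1) (g z.2) ∂π :=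
        integral_map hprod.aemeasurable measurable_dist.aestronglyMeasurable
    _ ≤ ∫ z, (a * dist z.1 z.2 + b) ∂π :=
        integral_mono_of_nonneg (ae_of_all _ fun _ => dist_nonneg) hbound
          (ae_of_all _ fun z => hfg z.1 z.2)
    _ = a * ∫ z, dist z.1 z.2 ∂π + b := by
        rw [integral_add (hdist.const_mul a) (integrable_const b), integral_const_mul,
          integral_const, probReal_univ, one_smul]

end Pushforward

theorem flow_wasserstein_stability_general (d : ℕ) (L : NNReal) (hL : 0 < (L : ℝ))
    (v₁ v₂ : ℝ → EuclideanSpace ℝ (Fin d) → EuclideanSpace ℝ (Fin d))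
    (hlip1 : ∀ t, LipschitzWith L (v₁ t)) (hlip2 : ∀ t, LipschitzWith L (v₂ t))
    (φ₁ φ₂ : ℝ → EuclideanSpace ℝ (Fin d) → EuclideanSpace ℝ (Fin d))
    (hφ₁0 : ∀ x, φ₁ 0 x = x) (hφ₂0 : ∀ x, φ₂ 0 x = x)
    (hφ₁ : ∀ x t, HasDerivAt (fun s => φ₁ s x) (v₁ t (φ₁ t x)) t)
    (hφ₂ : ∀ x t, HasDerivAt (fun s => φ₂ s x) (v₂ t (φ₂ t x)) t)
    (μ ν : Measure (EuclideanSpace ℝ (Fin d)))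
    [IsProbabilityMeasure μ] [IsProbabilityMeasure ν]
    (hμ : ∫⁻ x, ENNReal.ofReal ‖x‖ ∂μ < ⊤) (hν : ∫⁻ x, ENNReal.ofReal ‖x‖ ∂ν < ⊤)
    (t : ℝ) (ht : 0 ≤ t)
    (M : ℝ) (hM : ∀ s ∈ Set.Icc (0:ℝ) t, ∀ x, ‖v₁ s x - v₂ s x‖ ≤ M) :
    W1 (μ.map (φ₁ t)) (ν.map (φ₂ t)) ≤
      Real.exp ((L : ℝ) * t) * W1 μ ν + (Real.exp ((L : ℝ) * t) - 1) / (L : ℝ) * M := by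
  have hflow₁ : IsFlow v₁ φ₁ := ⟨hφ₁0, hφ₁⟩
  have hflow₂ : IsFlow v₂ φ₂ := ⟨hφ₂0, hφ₂⟩
  have hmoment : ∀ m : Measure (EuclideanSpace ℝ (Fin d)),
      ∫⁻ x, ENNReal.ofReal ‖x‖ ∂m < ⊤ → Integrable (‖·‖) m := fun m hm =>
    ⟨continuous_norm.aestronglyMeasurable,
      (hasFiniteIntegral_iff_ofReal (ae_of_all _ fun _ => norm_nonneg _)).2 hm⟩
  refine W1_map_map_le (hmoment μ hμ) (hmoment ν hν)
    (hflow₁.lipschitzWith hlip1 ht).continuous.measurable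
    (hflow₂.lipschitzWith hlip2 ht).continuous.measurable (Real.exp_pos _).le fun x y => ?_
  have hdist := hflow₁.dist_le_gronwallBound hflow₂ hlip1 ht
    (fun s hs => hM s (Ico_subset_Icc_self hs)) x y
  rw [gronwallBound_of_K_ne_0 hL.ne'] at hdist
  exact hdist.trans_eq (by ring)

/-- Stability of flows of Lipschitz vector fields in Wasserstein distance: if `φ¹, φ²` are the
flows of `v¹, v²` (Lipschitz in space with constant `L` uniformly in time), then for every
uniform bound `M` on `‖v¹_s − v²_s‖_∞` over `s ∈ [0,t]`,
`W₁(φ¹_t#μ, φ²_t#ν) ≤ e^{Lt} W₁(μ,ν) + ((e^{Lt} − 1)/L) M`. -/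
theorem flow_wasserstein_stability (d : ℕ) (L : NNReal) (hL : 0 < (L : ℝ))
    (v₁ v₂ : ℝ → EuclideanSpace ℝ (Fin d) → EuclideanSpace ℝ (Fin d))
    (hv₁cont : Continuous fun p : ℝ × EuclideanSpace ℝ (Fin d) => v₁ p.1 p.2)
    (hv₂cont : Continuous fun p : ℝ × EuclideanSpace ℝ (Fin d) => v₂ p.1 p.2)
    (hlip1 : ∀ t, LipschitzWith L (v₁ t)) (hlip2 : ∀ t, LipschitzWith L (v₂ t))
    (φ₁ φ₂ : ℝ → EuclideanSpace ℝ (Fin d) → EuclideanSpace ℝ (Fin d))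
    (hφ₁0 : ∀ x, φ₁ 0 x = x) (hφ₂0 : ∀ x, φ₂ 0 x = x)
    (hφ₁ : ∀ x t, HasDerivAt (fun s => φ₁ s x) (v₁ t (φ₁ t x)) t)
    (hφ₂ : ∀ x t, HasDerivAt (fun s => φ₂ s x) (v₂ t (φ₂ t x)) t)
    (μ ν : Measure (EuclideanSpace ℝ (Fin d)))
    [IsProbabilityMeasure μ] [IsProbabilityMeasure ν]
    (hμ : ∫⁻ x, ENNReal.ofReal ‖x‖ ∂μ < ⊤) (hν : ∫⁻ x, ENNReal.ofReal ‖x‖ ∂ν < ⊤)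
    (t : ℝ) (ht : 0 ≤ t)
    (M : ℝ) (hM : ∀ s ∈ Set.Icc (0:ℝ) t, ∀ x, ‖v₁ s x - v₂ s x‖ ≤ M) :
    W1 (μ.map (φ₁ t)) (ν.map (φ₂ t)) ≤
      Real.exp ((L : ℝ) * t) * W1 μ ν + (Real.exp ((L : ℝ) * t) - 1) / (L : ℝ) * M :=
  flow_wasserstein_stability_general d L hL v₁ v₂ hlip1 hlip2 φ₁ φ₂ hφ₁0 hφ₂0 hφ₁ hφ₂ μ ν hμ hν t ht
    M hM
end
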